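/- (A linear nonempty interval in the Muchnik lattice.) Let f, g ∈ ω^ω be such that g is not computable, g <_T f, and every h ≤_T f is either computable, or Turing equivalent to g, or Turing equivalent to f (i.e. the Turing lower cone of f consists of exactly the three degrees 0, deg(g), deg(f)). Define B = {h ∈ ω^ω : ¬(h ≤_T f)}, A = B ∪ {g}, and D = B ∪ {f}. Then A <_w D <_w B, and every mass problem C with A ≤_w C ≤_w B satisfies C ≡_w A, C ≡_w D, or C ≡_w B. In particular the open interval (A, B) in the Muchnik order contains exactly one degree, the degree of D. -/
import Mathlib


open Cardinal

namespace Muchnik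

/-- Oracle partial recursiveness: `f` is partial recursive relative to the oracle `g`. -/
inductive RecursiveIn (g : ℕ → ℕ) : (ℕ →. ℕ) → Prop
  | oracle : RecursiveIn g ↑g
  | zero : RecursiveIn g (pure 0)
  | succ : RecursiveIn g ↑Nat.succ
  | left : RecursiveIn g ↑fun n : ℕ => n.unpair.1
  | right : RecursiveIn g ↑fun n : ℕ => n.unpair.2
  | pair {f h} : RecursiveIn g f → RecursiveIn g h →
      RecursiveIn g fun n => Nat.pair <$> f n <*> h n
  | comp {f h} : RecursiveIn g f → RecursiveIn g h →
      RecursiveIn g fun n => h n >>= f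
  | prec {f h} : RecursiveIn g f → RecursiveIn g h →
      RecursiveIn g (Nat.unpaired fun a n =>
        n.rec (f a) fun y IH => do let i ← IH; h (Nat.pair a (Nat.pair y i)))
  | rfind {f} : RecursiveIn g f →
      RecursiveIn g fun a => Nat.rfind fun n => (fun m => m = 0) <$> f (Nat.pair a n)

/-- Turing reducibility `f ≤_T g` for elements of Baire space. -/
def TuringLe (f g : ℕ → ℕ) : Prop := RecursiveIn g ↑f

/-- Strict Turing reducibility `f <_T g`. -/
def TuringLt (f g : ℕ → ℕ) : Prop := TuringLe f g ∧ ¬ TuringLe g f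

/-- Turing equivalence `f ≡_T g`. -/
def TuringEquiv (f g : ℕ → ℕ) : Prop := TuringLe f g ∧ TuringLe g f

/-- Turing incomparability `f |_T g`. -/
def TuringIncomp (f g : ℕ → ℕ) : Prop := ¬ TuringLe f g ∧ ¬ TuringLe g f

/-- Muchnik reducibility `A ≤_w B` between mass problems. -/
def MuchnikLe (A B : Set (ℕ → ℕ)) : Prop := ∀ f ∈ B, ∃ g ∈ A, TuringLe g f

/-- Strict Muchnik reducibility `A <_w B`. -/
def MuchnikLt (A B : Set (ℕ → ℕ)) : Prop := MuchnikLe A B ∧ ¬ MuchnikLe B A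

/-- Muchnik equivalence `A ≡_w B`. -/
def MuchnikEquiv (A B : Set (ℕ → ℕ)) : Prop := MuchnikLe A B ∧ MuchnikLe B A

/-- The strict Turing upper cone `C'(f) = {g : f <_T g}`. -/
def cone (f : ℕ → ℕ) : Set (ℕ → ℕ) := {g | TuringLt f g}

/-- The recursive join `f ⊕ g`: `(f ⊕ g)(2x) = f(x)` and `(f ⊕ g)(2x+1) = g(x)`. -/
def join (f g : ℕ → ℕ) : ℕ → ℕ := fun n => if n % 2 = 0 then f (n / 2) else g (n / 2)

/-- The join `A + B` of mass problems. -/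
def joinSet (A B : Set (ℕ → ℕ)) : Set (ℕ → ℕ) := {h | ∃ f ∈ A, ∃ g ∈ B, h = join f g}

/-- Identification of `2^ω` with a subset of Baire space. -/
def ofBool (X : ℕ → Bool) : ℕ → ℕ := fun n => if X n then 1 else 0


lemma turingLe_refl (f : ℕ → ℕ) : TuringLe f f := RecursiveIn.oracle

lemma recursiveIn_mono {g h : ℕ → ℕ} (hgh : TuringLe g h) {p : ℕ →. ℕ}
    (hp : RecursiveIn g p) : RecursiveIn h p := by
  induction hp with
  | oracle => exact hgh
  | zero => exact .zero
  | succ => exact .succ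
  | left => exact .left
  | right => exact .right
  | pair _ _ ih1 ih2 => exact .pair ih1 ih2
  | comp _ _ ih1 ih2 => exact .comp ih1 ih2
  | prec _ _ ih1 ih2 => exact .prec ih1 ih2
  | rfind _ ih => exact .rfind ih

lemma turingLe_trans {f g h : ℕ → ℕ} (h1 : TuringLe f g) (h2 : TuringLe g h) :
    TuringLe f h := recursiveIn_mono h2 h1

lemma recursiveIn_of_partrec {g : ℕ → ℕ} {p : ℕ →. ℕ} (hp : Nat.Partrec p) :
    RecursiveIn g p := by
  induction hp with
  | zero => exact .zero
  | succ => exact .succ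
  | left => exact .left
  | right => exact .right
  | pair _ _ ih1 ih2 => exact .pair ih1 ih2
  | comp _ _ ih1 ih2 => exact .comp ih1 ih2
  | prec _ _ ih1 ih2 => exact .prec ih1 ih2
  | rfind _ ih => exact .rfind ih

lemma partrec_of_recursiveIn {g : ℕ → ℕ} (hgc : Computable g) {p : ℕ →. ℕ}
    (hp : RecursiveIn g p) : Nat.Partrec p := by
  induction hp with
  | oracle => exact Partrec.nat_iff.1 hgc.partrec
  | zero => exact .zero
  | succ => exact .succ
  | left => exact .left
  | right => exact .right
  | pair _ _ ih1 ih2 => exact .pair ih1 ih2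
  | comp _ _ ih1 ih2 => exact .comp ih1 ih2
  | prec _ _ ih1 ih2 => exact .prec ih1 ih2
  | rfind _ ih => exact .rfind ih

lemma computable_of_turingLe {f g : ℕ → ℕ} (h : TuringLe f g) (hgc : Computable g) :
    Computable f := by
  have : Nat.Partrec (f : ℕ →. ℕ) := partrec_of_recursiveIn hgc h
  exact Partrec.nat_iff.2 this

/-- (A linear nonempty interval in the Muchnik lattice.) Suppose `g` is not computable,
`g <_T f`, and every `h ≤_T f` is computable, Turing equivalent to `g`, or Turing
equivalent to `f`. Let `B = {h : ¬(h ≤_T f)}`, `A = B ∪ {g}`, `D = B ∪ {f}`. Then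
`A <_w D <_w B` and every `C` with `A ≤_w C ≤_w B` is Muchnik equivalent to `A`, `D`,
or `B`; so the open interval `(A, B)` contains exactly one degree, that of `D`. -/
theorem linear_interval (f g : ℕ → ℕ) (hg : ¬ Computable g) (hgf : TuringLt g f)
    (hcone : ∀ h : ℕ → ℕ, TuringLe h f → Computable h ∨ TuringEquiv h g ∨ TuringEquiv h f) :
    MuchnikLt ({h : ℕ → ℕ | ¬ TuringLe h f} ∪ {g}) ({h : ℕ → ℕ | ¬ TuringLe h f} ∪ {f}) ∧
    MuchnikLt ({h : ℕ → ℕ | ¬ TuringLe h f} ∪ {f}) {h : ℕ → ℕ | ¬ TuringLe h f} ∧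
    (∀ C : Set (ℕ → ℕ), MuchnikLe ({h : ℕ → ℕ | ¬ TuringLe h f} ∪ {g}) C →
      MuchnikLe C {h : ℕ → ℕ | ¬ TuringLe h f} →
      MuchnikEquiv C ({h : ℕ → ℕ | ¬ TuringLe h f} ∪ {g}) ∨
        MuchnikEquiv C ({h : ℕ → ℕ | ¬ TuringLe h f} ∪ {f}) ∨
        MuchnikEquiv C {h : ℕ → ℕ | ¬ TuringLe h f}) := by
  set B : Set (ℕ → ℕ) := {h : ℕ → ℕ | ¬ TuringLe h f} with hB
  set A : Set (ℕ → ℕ) := B ∪ {g} with hA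
  set D : Set (ℕ → ℕ) := B ∪ {f} with hD
  have hgA : g ∈ A := Or.inr rfl
  have hfD : f ∈ D := Or.inr rfl
  have hBA : ∀ h ∈ B, h ∈ A := fun h hh => Or.inl hh
  have hBD : ∀ h ∈ B, h ∈ D := fun h hh => Or.inl hh
  -- A ≤_w D
  have hAD : MuchnikLe A D := by
    intro h hh
    rcases hh with hh | hh
    · exact ⟨h, hBA h hh, turingLe_refl h⟩
    · rcases hh with rfl
      exact ⟨g, hgA, hgf.1⟩
  -- ¬ D ≤_w A
  have hDA : ¬ MuchnikLe D A := by
    intro H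
    rcases H g hgA with ⟨d, hd, hdg⟩
    rcases hd with hd | hd
    · exact hd (turingLe_trans hdg hgf.1)
    · rcases hd with rfl
      exact hgf.2 hdg
  -- D ≤_w B
  have hDB : MuchnikLe D B := fun h hh => ⟨h, hBD h hh, turingLe_refl h⟩
  -- ¬ B ≤_w D
  have hBDn : ¬ MuchnikLe B D := by
    intro H
    rcases H f hfD with ⟨b, hb, hbf⟩
    exact hb hbf
  refine ⟨⟨hAD, hDA⟩, ⟨hDB, hBDn⟩, ?_⟩
  intro C hAC hCB
  by_cases hcg : ∃ c ∈ C, TuringLe c g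
  · -- C ≡ A
    left
    refine ⟨?_, hAC⟩
    intro a ha
    rcases ha with ha | ha
    · exact hCB a ha
    · rcases ha with rfl
      exact hcg
  by_cases hcf : ∃ c ∈ C, TuringLe c f
  · -- C ≡ D
    right; left
    constructor
    · intro d hd
      rcases hd with hd | hd
      · exact hCB d hd
      · rcases hd with rfl
        exact hcf
    · intro h hh
      rcases hAC h hh with ⟨a, ha, hah⟩
      rcases ha with ha | ha
      · exact ⟨a, hBD a ha, hah⟩
      · rcases ha with rfl
        -- g ≤_T h
        by_cases hhf : TuringLe h f
        · rcases hcone h hhf with hc | hc | hc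
          · exact absurd (computable_of_turingLe hah hc) hg
          · exact absurd ⟨h, hh, hc.1⟩ hcg
          · exact ⟨f, hfD, hc.2⟩
        · exact ⟨h, hBD h hhf, turingLe_refl h⟩
  · -- C ≡ B
    right; right
    refine ⟨hCB, ?_⟩
    intro h hh
    have hhf : ¬ TuringLe h f := fun contra => hcf ⟨h, hh, contra⟩
    exact ⟨h, hhf, turingLe_refl h⟩

end Muchnik
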